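/- Let a, b be coprime integers with b > a > 2. Then for every integer c ≥ (a−1)(b−1) there exists a tame polynomial automorphism of C^3 with multidegree (a, b, c). -/

import Mathlib

open MvPolynomial Finset

/-- A polynomial map `ℂ^n → ℂ^n`, given by its coordinate polynomials. -/
abbrev PolyMap (n : ℕ) := Fin n → MvPolynomial (Fin n) ℂ

/-- Composition of polynomial maps: `(compPM F G) = F ∘ G`. -/
noncomputable def compPM {n : ℕ} (F G : PolyMap n) : PolyMap n :=
  fun i => aeval G (F i)

/-- The identity polynomial map. -/
noncomputable def idPM (n : ℕ) : PolyMap n := fun i => X i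

/-- `F` is a polynomial automorphism: it has a polynomial inverse. -/
def IsPolyAut {n : ℕ} (F : PolyMap n) : Prop :=
  ∃ G : PolyMap n, compPM F G = idPM n ∧ compPM G F = idPM n

/-- `F` is elementary: it changes one coordinate `j` by adding a polynomial
not involving the variable `j`. -/
def IsElementaryPM {n : ℕ} (F : PolyMap n) : Prop :=
  ∃ (j : Fin n) (g : MvPolynomial (Fin n) ℂ),
    degreeOf j g = 0 ∧ F j = X j + g ∧ ∀ i, i ≠ j → F i = X i

/-- `F` is a linear (degree ≤ 1) automorphism. -/
def IsLinearPM {n : ℕ} (F : PolyMap n) : Prop :=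
  IsPolyAut F ∧ ∀ i, (F i).totalDegree ≤ 1

/-- `F` is tame: a composition of linear and elementary automorphisms. -/
inductive IsTamePM : {n : ℕ} → PolyMap n → Prop
  | lin {n} (F : PolyMap n) : IsLinearPM F → IsTamePM F
  | elem {n} (F : PolyMap n) : IsElementaryPM F → IsTamePM F
  | comp {n} (F G : PolyMap n) : IsTamePM F → IsTamePM G → IsTamePM (compPM F G)

/-- The multidegree of a polynomial map of `ℂ^3`. -/
noncomputable def mdeg3 (F : PolyMap 3) : ℕ × ℕ × ℕ :=
  ((F 0).totalDegree, (F 1).totalDegree, (F 2).totalDegree)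

/-!
Since `c ≥ (a - 1) * (b - 1)` exceeds the Frobenius number `a * b - a - b` of the semigroup
generated by `a` and `b`, we can write `c = p * a + q * b`. The map
`(x + z^a, y + z^b, z + (x + z^a)^p (y + z^b)^q)` is then the composition of the three elementary
automorphisms `(x + z^a, y, z)`, `(x, y + z^b, z)` and `(x, y, z + x^p y^q)`, and since
`ℂ[x, y, z]` is a domain its third component has degree `p * a + q * b = c`.
-/

lemma exists_mul_add_mul_eq_of_sub_one_mul_sub_one_le {a b c : ℕ} (hco : a.Coprime b)
    (ha : 1 < a) (hb : 1 < b) (hc : (a - 1) * (b - 1) ≤ c) : ∃ p q, p * a + q * b = c := by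
  have hmem : c ∈ AddSubmonoid.closure ({a, b} : Set ℕ) := by
    by_contra hc'
    have hle : c ≤ a * b - a - b := (frobeniusNumber_pair hco ha hb).2 hc'
    have hab : (a - 1) * (b - 1) + a + b = a * b + 1 := by
      obtain ⟨a, rfl⟩ := Nat.exists_eq_add_of_lt ha
      obtain ⟨b, rfl⟩ := Nat.exists_eq_add_of_lt hb
      simp only [Nat.add_sub_cancel]
      ring
    have := Nat.add_le_mul ha hb
    omega
  obtain ⟨p, q, h⟩ := (AddSubmonoid.mem_closure_pair a b c).mp hmem
  exact ⟨p, q, by simpa using h⟩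

section Degree

variable {σ R : Type*} [CommSemiring R]

lemma aeval_eq_self_of_degreeOf_eq_zero {j : σ} {g : MvPolynomial σ R} (hg : degreeOf j g = 0)
    {H : σ → MvPolynomial σ R} (hH : ∀ i, i ≠ j → H i = X i) : aeval H g = g := by
  conv_rhs => rw [← aeval_X_left_apply g]
  refine eval₂Hom_congr' rfl (fun i hi _ => hH i ?_) rfl
  rintro rfl
  exact mem_vars_iff_degreeOf_ne_zero.mp hi hg

lemma totalDegree_X_add_X_pow [Nontrivial R] (i j : σ) {k : ℕ} (hk : 1 < k) :
    (X i + X j ^ k : MvPolynomial σ R).totalDegree = k := by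
  rw [totalDegree_add_eq_right_of_totalDegree_lt] <;> simp [totalDegree_X, hk]

lemma totalDegree_pow_of_noZeroDivisors [NoZeroDivisors R] (p : MvPolynomial σ R) (k : ℕ) :
    (p ^ k).totalDegree = k * p.totalDegree := by
  rcases eq_or_ne p 0 with rfl | hp
  · cases k <;> simp
  induction k with
  | zero => simp
  | succ k ih =>
    rw [pow_succ, totalDegree_mul_of_isDomain (pow_ne_zero k hp) hp, ih, Nat.succ_mul]

lemma totalDegree_X_add_pow_mul_pow [NoZeroDivisors R] [Nontrivial R] (i : σ)
    {f g : MvPolynomial σ R} (hf : f ≠ 0) (hg : g ≠ 0) {k l : ℕ}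
    (h : 1 < k * f.totalDegree + l * g.totalDegree) :
    (X i + f ^ k * g ^ l).totalDegree = k * f.totalDegree + l * g.totalDegree := by
  have hfg : (f ^ k * g ^ l).totalDegree = k * f.totalDegree + l * g.totalDegree := by
    rw [totalDegree_mul_of_isDomain (pow_ne_zero k hf) (pow_ne_zero l hg),
      totalDegree_pow_of_noZeroDivisors, totalDegree_pow_of_noZeroDivisors]
  rw [totalDegree_add_eq_right_of_totalDegree_lt, hfg]
  rwa [hfg, totalDegree_X]

end Degree

section PolyMap

variable {n : ℕ}

lemma compPM_assoc (F G H : PolyMap n) :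
    compPM (compPM F G) H = compPM F (compPM G H) := by
  funext i
  exact comp_aeval_apply G (aeval H) (F i)

lemma idPM_compPM (F : PolyMap n) : compPM (idPM n) F = F := by
  funext i
  exact aeval_X F i

lemma IsPolyAut.comp {F G : PolyMap n} (hF : IsPolyAut F) (hG : IsPolyAut G) :
    IsPolyAut (compPM F G) := by
  obtain ⟨F', hFF', hF'F⟩ := hF
  obtain ⟨G', hGG', hG'G⟩ := hG
  refine ⟨compPM G' F', ?_, ?_⟩
  · rw [compPM_assoc, ← compPM_assoc G, hGG', idPM_compPM, hFF']
  · rw [compPM_assoc, ← compPM_assoc F', hF'F, idPM_compPM, hG'G]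

noncomputable def elemPM (j : Fin n) (g : MvPolynomial (Fin n) ℂ) : PolyMap n :=
  fun i => if i = j then X j + g else X i

lemma elemPM_zero (j : Fin n) : elemPM j 0 = idPM n := by
  funext i
  by_cases hi : i = j <;> simp [elemPM, idPM, hi]

lemma compPM_elemPM_apply (j : Fin n) (g : MvPolynomial (Fin n) ℂ) (G : PolyMap n) (i : Fin n) :
    compPM (elemPM j g) G i = if i = j then G j + aeval G g else G i := by
  by_cases hi : i = j <;> simp [compPM, elemPM, hi]

lemma compPM_elemPM_elemPM {j : Fin n} {g : MvPolynomial (Fin n) ℂ} (hg : degreeOf j g = 0)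
    (h : MvPolynomial (Fin n) ℂ) : compPM (elemPM j g) (elemPM j h) = elemPM j (h + g) := by
  funext i
  rw [compPM_elemPM_apply, aeval_eq_self_of_degreeOf_eq_zero (H := elemPM j h) hg
    fun k hk => if_neg hk]
  by_cases hi : i = j <;> simp [elemPM, hi, add_assoc]

lemma isElementaryPM_iff {F : PolyMap n} :
    IsElementaryPM F ↔ ∃ j g, degreeOf j g = 0 ∧ F = elemPM j g := by
  constructor
  · rintro ⟨j, g, hg, hFj, hF⟩
    refine ⟨j, g, hg, funext fun i => ?_⟩
    by_cases hi : i = j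
    · simp [elemPM, hi, hFj]
    · simp [elemPM, hi, hF i hi]
  · rintro ⟨j, g, hg, rfl⟩
    exact ⟨j, g, hg, if_pos rfl, fun _ hi => if_neg hi⟩

lemma isPolyAut_elemPM {j : Fin n} {g : MvPolynomial (Fin n) ℂ} (hg : degreeOf j g = 0) :
    IsPolyAut (elemPM j g) :=
  ⟨elemPM j (-g), by rw [compPM_elemPM_elemPM hg, neg_add_cancel, elemPM_zero],
    by rw [compPM_elemPM_elemPM (by rwa [degreeOf_neg]), add_neg_cancel, elemPM_zero]⟩

lemma IsTamePM.isPolyAut {F : PolyMap n} (hF : IsTamePM F) : IsPolyAut F := by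
  induction hF with
  | lin F hF => exact hF.1
  | elem F hF =>
    obtain ⟨j, g, hg, rfl⟩ := isElementaryPM_iff.mp hF
    exact isPolyAut_elemPM hg
  | comp F G _ _ ihF ihG => exact ihF.comp ihG

lemma isTamePM_elemPM {j : Fin n} {g : MvPolynomial (Fin n) ℂ} (hg : degreeOf j g = 0) :
    IsTamePM (elemPM j g) :=
  .elem _ (isElementaryPM_iff.mpr ⟨j, g, hg, rfl⟩)

end PolyMap

noncomputable def tameMap3 (a b p q : ℕ) : PolyMap 3 :=
  compPM (elemPM 2 (X 0 ^ p * X 1 ^ q)) (compPM (elemPM 1 (X 2 ^ b)) (elemPM 0 (X 2 ^ a)))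

lemma isTamePM_tameMap3 (a b p q : ℕ) : IsTamePM (tameMap3 a b p q) := by
  refine .comp _ _ (isTamePM_elemPM ?_) (.comp _ _ (isTamePM_elemPM ?_) (isTamePM_elemPM ?_))
  · refine Nat.le_zero.mp ((degreeOf_mul_le _ _ _).trans ?_)
    rw [degreeOf_X_pow_of_ne p (by decide), degreeOf_X_pow_of_ne q (by decide)]
  · exact degreeOf_X_pow_of_ne b (by decide)
  · exact degreeOf_X_pow_of_ne a (by decide)

lemma tameMap3_eq (a b p q : ℕ) : tameMap3 a b p q =
    ![X 0 + X 2 ^ a, X 1 + X 2 ^ b, X 2 + (X 0 + X 2 ^ a) ^ p * (X 1 + X 2 ^ b) ^ q] := by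
  funext i
  fin_cases i <;> simp [tameMap3, compPM_elemPM_apply, elemPM]

lemma mdeg3_tameMap3 {a b : ℕ} (ha : 1 < a) (hb : 1 < b) {p q : ℕ} (hpq : 1 < p * a + q * b) :
    mdeg3 (tameMap3 a b p q) = (a, b, p * a + q * b) := by
  have hx : (X 0 + X 2 ^ a : MvPolynomial (Fin 3) ℂ).totalDegree = a :=
    totalDegree_X_add_X_pow 0 2 ha
  have hy : (X 1 + X 2 ^ b : MvPolynomial (Fin 3) ℂ).totalDegree = b :=
    totalDegree_X_add_X_pow 1 2 hb
  have hx₀ : (X 0 + X 2 ^ a : MvPolynomial (Fin 3) ℂ) ≠ 0 :=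
    ne_of_apply_ne totalDegree (by rw [hx, totalDegree_zero]; omega)
  have hy₀ : (X 1 + X 2 ^ b : MvPolynomial (Fin 3) ℂ) ≠ 0 :=
    ne_of_apply_ne totalDegree (by rw [hy, totalDegree_zero]; omega)
  have hz := totalDegree_X_add_pow_mul_pow 2 hx₀ hy₀ (k := p) (l := q) (by rwa [hx, hy])
  simp [mdeg3, tameMap3_eq, hx, hy, hz]

theorem stmt5 (a b : ℕ) (ha : 2 < a) (hab : a < b) (hco : Nat.Coprime a b)
    (c : ℕ) (hc : (a - 1) * (b - 1) ≤ c) :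
    ∃ F : PolyMap 3, IsTamePM F ∧ IsPolyAut F ∧ mdeg3 F = (a, b, c) := by
  obtain ⟨p, q, rfl⟩ :=
    exists_mul_add_mul_eq_of_sub_one_mul_sub_one_le hco (by omega) (by omega) hc
  have hF := isTamePM_tameMap3 a b p q
  refine ⟨_, hF, hF.isPolyAut, mdeg3_tameMap3 (by omega) (by omega) ?_⟩
  calc 1 < 2 * 2 := by norm_num
    _ ≤ (a - 1) * (b - 1) := Nat.mul_le_mul (by omega) (by omega)
    _ ≤ p * a + q * b := hc
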